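/- The largest eigenvalue of A(N,1) converges as N → ∞, and lim_{N → ∞} λ_max(A(N,1)) = a_0 + 2 Σ_{n=1}^∞ a_n, where a_n = A_{(0,1),(n,1)}. -/

import Mathlib

open MeasureTheory

/-- The mother Haar wavelet. -/
noncomputable def motherHaar (x : ℝ) : ℝ :=
  if 0 ≤ x ∧ x < 1/2 then 1 else if 1/2 ≤ x ∧ x < 1 then -1 else 0

/-- The Haar wavelet `ψ_{n,k}(x) = 2^{n/2} ψ(2^n x - k)`. -/
noncomputable def haar (n k : ℤ) (x : ℝ) : ℝ :=
  (2 : ℝ) ^ ((n : ℝ) / 2) * motherHaar ((2 : ℝ) ^ n * x - k)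

/-- `A_{(n,k),(m,ℓ)} = -∬ (1/(x+y)) ψ_{n,-k}(x) ψ_{m,-ℓ}(y) dx dy`. -/
noncomputable def Aent (n k m l : ℤ) : ℝ :=
  - ∫ p : ℝ × ℝ, (1 / (p.1 + p.2)) * haar n (-k) p.1 * haar m (-l) p.2

/-- `a_n = A_{(0,1),(n,1)}`. -/
noncomputable def aSeq (n : ℕ) : ℝ := Aent 0 1 (n : ℤ) 1

/-- The matrix `A(N,1)`: the real symmetric `(N+1) × (N+1)` Toeplitz matrix with
`(i,j)` entry `a_{|i-j|}`. -/
noncomputable def AN1 (N : ℕ) : Matrix (Fin (N + 1)) (Fin (N + 1)) ℝ :=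
  fun i j => aSeq ((i : ℤ) - (j : ℤ)).natAbs



open Real Set Filter Topology

noncomputable def ampl (n : ℕ) : ℝ := (2:ℝ) ^ ((n:ℝ)/2)
noncomputable def dd (n : ℕ) : ℝ := ((2:ℝ)^n)⁻¹

lemma ampl_pos (n : ℕ) : 0 < ampl n := Real.rpow_pos_of_pos two_pos _
lemma dd_pos (n : ℕ) : 0 < dd n := by rw [dd]; positivity
lemma dd_le_one (n : ℕ) : dd n ≤ 1 := by
  rw [dd, inv_le_one_iff₀]; right; exact one_le_pow₀ one_le_two

lemma measurable_motherHaar : Measurable motherHaar := by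
  unfold motherHaar
  refine Measurable.ite ?_ measurable_const (Measurable.ite ?_ measurable_const measurable_const)
  · exact (measurableSet_le measurable_const measurable_id).inter
      (measurableSet_lt measurable_id measurable_const)
  · exact (measurableSet_le measurable_const measurable_id).inter
      (measurableSet_lt measurable_id measurable_const)

lemma measurable_haar (n k : ℤ) : Measurable (haar n k) := by
  unfold haar
  exact measurable_const.mul
    (measurable_motherHaar.comp ((measurable_const.mul measurable_id).sub measurable_const))

lemma haar_nat (n : ℕ) (y : ℝ) :
    haar (n:ℤ) (-1) y = ampl n *
      (indicator (Ico (-dd n) (-(dd n)/2)) (fun _ => (1:ℝ)) y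
        - indicator (Ico (-(dd n)/2) 0) (fun _ => (1:ℝ)) y) := by
  unfold haar motherHaar ampl dd
  rw [zpow_natCast]
  set c : ℝ := (2:ℝ)^n with hcdef
  have hc : (0:ℝ) < c := by positivity
  have hcc : c * c⁻¹ = 1 := mul_inv_cancel₀ hc.ne'
  have hcast : (((n:ℤ)):ℝ) = (n:ℝ) := by push_cast; ring
  rw [hcast]
  have hsub : c * y - ((-1 : ℤ) : ℝ) = c * y + 1 := by push_cast; ring
  rw [hsub]
  congr 1
  have e1 : (0 ≤ c*y+1 ∧ c*y+1 < 1/2) ↔ (-c⁻¹ ≤ y ∧ y < -c⁻¹/2) := by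
    constructor <;> rintro ⟨u,v⟩ <;> constructor <;> nlinarith
  have e2 : (1/2 ≤ c*y+1 ∧ c*y+1 < 1) ↔ (-c⁻¹/2 ≤ y ∧ y < 0) := by
    constructor <;> rintro ⟨u,v⟩ <;> constructor <;> nlinarith
  simp only [indicator_apply, mem_Ico]
  by_cases h1 : 0 ≤ c*y+1 ∧ c*y+1 < 1/2
  · have m1 := e1.mp h1
    have hn2 : ¬(-c⁻¹/2 ≤ y ∧ y < 0) := fun h => absurd h.1 (not_le.2 m1.2)
    rw [if_pos h1, if_pos (mem_Ico.1 (mem_Ico.2 m1)), if_neg hn2]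
    ring
  · by_cases h2 : 1/2 ≤ c*y+1 ∧ c*y+1 < 1
    · have m2 := e2.mp h2
      have hn1 : ¬(-c⁻¹ ≤ y ∧ y < -c⁻¹/2) := fun h => absurd h.2 (not_lt.2 m2.1)
      rw [if_neg h1, if_pos h2, if_neg hn1, if_pos m2]
      ring
    · have hn1 : ¬(-c⁻¹ ≤ y ∧ y < -c⁻¹/2) := fun h => h1 (e1.mpr h)
      have hn2 : ¬(-c⁻¹/2 ≤ y ∧ y < 0) := fun h => h2 (e2.mpr h)
      rw [if_neg h1, if_neg h2, if_neg hn1, if_neg hn2]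
      ring

lemma exp_Ico_integrable (t a b : ℝ) : IntegrableOn (fun x => exp (t*x)) (Ico a b) :=
  ((continuous_exp.comp (continuous_const.mul continuous_id)).integrableOn_Icc).mono_set
    Ico_subset_Icc_self

lemma integral_exp_Ico {t : ℝ} (a b : ℝ) (ht : t ≠ 0) (hab : a ≤ b) :
    ∫ x in Ico a b, exp (t*x) = (exp (t*b) - exp (t*a))/t := by
  rw [integral_Ico_eq_integral_Ioo, ← integral_Ioc_eq_integral_Ioo,
    ← intervalIntegral.integral_of_le hab,
    intervalIntegral.integral_comp_mul_left (fun u => exp u) ht, integral_exp]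
  rw [smul_eq_mul]
  field_simp

lemma integrable_exp_haar (n : ℕ) (t : ℝ) :
    Integrable (fun y => exp (t*y) * haar (n:ℤ) (-1) y) := by
  have key : (fun y => exp (t*y) * haar (n:ℤ) (-1) y) = fun y =>
      ampl n * (indicator (Ico (-dd n) (-(dd n)/2)) (fun y => exp (t*y)) y)
      - ampl n * (indicator (Ico (-(dd n)/2) 0) (fun y => exp (t*y)) y) := by
    funext y
    rw [haar_nat]
    simp only [indicator_apply]
    split_ifs <;> ring
  rw [key]
  exact (((exp_Ico_integrable t _ _).integrable_indicator measurableSet_Ico).const_mul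
    _).sub (((exp_Ico_integrable t _ _).integrable_indicator measurableSet_Ico).const_mul _)

lemma integral_exp_haar (n : ℕ) {t : ℝ} (ht : 0 < t) :
    ∫ y, exp (t*y) * haar (n:ℤ) (-1) y = -(ampl n * (1 - exp (-(t * dd n / 2)))^2 / t) := by
  have key : (fun y => exp (t*y) * haar (n:ℤ) (-1) y) = fun y =>
      ampl n * (indicator (Ico (-dd n) (-(dd n)/2)) (fun y => exp (t*y)) y)
      - ampl n * (indicator (Ico (-(dd n)/2) 0) (fun y => exp (t*y)) y) := by
    funext y
    rw [haar_nat]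
    simp only [indicator_apply]
    split_ifs <;> ring
  have hd := dd_pos n
  rw [key, integral_sub
    (((exp_Ico_integrable t _ _).integrable_indicator measurableSet_Ico).const_mul _)
    (((exp_Ico_integrable t _ _).integrable_indicator measurableSet_Ico).const_mul _),
    integral_const_mul, integral_const_mul, integral_indicator measurableSet_Ico,
    integral_indicator measurableSet_Ico, integral_exp_Ico _ _ ht.ne' (by linarith),
    integral_exp_Ico _ _ ht.ne' (by linarith)]
  have h1 : t * (-dd n) = (-(t * dd n / 2)) + (-(t * dd n / 2)) := by ring
  have h2 : t * (-dd n/2) = -(t * dd n / 2) := by ring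
  rw [h1, h2, exp_add, mul_zero, exp_zero]
  field_simp
  ring

lemma integral_abs_exp_haar (n : ℕ) {t : ℝ} (ht : 0 < t) :
    ∫ y, |exp (t*y) * haar (n:ℤ) (-1) y| = ampl n * (1 - exp (-(t * dd n))) / t := by
  have ha := ampl_pos n
  have hd := dd_pos n
  have key : (fun y => |exp (t*y) * haar (n:ℤ) (-1) y|) = fun y =>
      ampl n * (indicator (Ico (-dd n) (-(dd n)/2)) (fun y => exp (t*y)) y)
      + ampl n * (indicator (Ico (-(dd n)/2) 0) (fun y => exp (t*y)) y) := by
    funext y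
    rw [haar_nat]
    simp only [indicator_apply, mem_Ico]
    split_ifs with h1 h2 h2
    · linarith [h1.2, h2.1]
    · rw [abs_of_nonneg (by positivity)]
      ring
    · rw [abs_of_nonpos (by nlinarith [exp_pos (t*y)])]
      ring
    · simp
  rw [key, integral_add
    (((exp_Ico_integrable t _ _).integrable_indicator measurableSet_Ico).const_mul _)
    (((exp_Ico_integrable t _ _).integrable_indicator measurableSet_Ico).const_mul _),
    integral_const_mul, integral_const_mul, integral_indicator measurableSet_Ico,
    integral_indicator measurableSet_Ico, integral_exp_Ico _ _ ht.ne' (by linarith),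
    integral_exp_Ico _ _ ht.ne' (by linarith)]
  have h1 : t * (-dd n) = -(t * dd n) := by ring
  rw [h1, mul_zero, exp_zero]
  field_simp
  ring

lemma integral_exp_Ioi_neg {s : ℝ} (hs : s < 0) : ∫ t in Ioi (0:ℝ), exp (t*s) = -s⁻¹ := by
  have hb : 0 < -s := neg_pos.2 hs
  have h := integral_comp_mul_right_Ioi (fun u => exp (-u)) 0 hb
  simp only [zero_mul, smul_eq_mul, integral_exp_neg_Ioi_zero] at h
  have h2 : (fun t : ℝ => exp (t*s)) = fun t : ℝ => exp (-(t * -s)) := by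
    funext u; ring_nf
  rw [h2, h, mul_one, ← inv_neg]

lemma exp_bound1 {s : ℝ} (hs : 0 ≤ s) : 0 ≤ 1 - exp (-s) := by
  have := exp_le_exp.2 (neg_nonpos.2 hs)
  rw [exp_zero] at this; linarith

lemma exp_bound2 {s : ℝ} : 1 - exp (-s) ≤ 1 := by linarith [exp_pos (-s)]

lemma exp_bound3 (s : ℝ) : 1 - exp (-s) ≤ s := by linarith [add_one_le_exp (-s)]

noncomputable def BB (t : ℝ) : ℝ := if t ≤ 1 then 1 else (t^2)⁻¹

lemma measurable_BB : Measurable BB :=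
  Measurable.ite (measurableSet_le measurable_id measurable_const) measurable_const
    ((measurable_id.pow_const 2).inv)

lemma integrableOn_BB : IntegrableOn BB (Ioi (0:ℝ)) := by
  have h1 : IntegrableOn BB (Ioc (0:ℝ) 1) := by
    have hc : IntegrableOn (fun _ => (1:ℝ)) (Ioc (0:ℝ) 1) volume :=
      integrableOn_const measure_Ioc_lt_top.ne
    refine hc.congr_fun (fun x hx => ?_) measurableSet_Ioc
    show (1:ℝ) = BB x
    rw [BB, if_pos hx.2]
  have h2 : IntegrableOn BB (Ioi (1:ℝ)) := by
    refine IntegrableOn.congr_fun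
      (integrableOn_Ioi_rpow_of_lt (by norm_num : (-2:ℝ) < -1) one_pos)
      (fun x hx => ?_) measurableSet_Ioi
    have hx0 : (0:ℝ) < x := lt_trans one_pos hx
    show x ^ (-2:ℝ) = BB x
    rw [BB, if_neg (not_le.2 hx), show (-2:ℝ) = -((2:ℕ):ℝ) by norm_num,
      rpow_neg hx0.le, rpow_natCast]
  have := h1.union h2
  rwa [Ioc_union_Ioi_eq_Ioi (by norm_num : (0:ℝ) ≤ 1)] at this

lemma integral_inv_sq_Ioi {T : ℝ} (hT : 0 < T) : ∫ t in Ioi T, (t^2)⁻¹ = T⁻¹ := by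
  have h := integral_Ioi_rpow_of_lt (show (-2:ℝ) < -1 by norm_num) hT
  rw [setIntegral_congr_fun measurableSet_Ioi (fun x hx => by
    show x ^ (-2:ℝ) = (x^2)⁻¹
    rw [show (-2:ℝ) = -((2:ℕ):ℝ) by norm_num, rpow_neg (lt_trans hT hx).le, rpow_natCast]
      : EqOn (fun t => t ^ (-2:ℝ)) (fun t => ((t:ℝ)^2)⁻¹) (Ioi T))] at h
  rw [h]
  rw [show (-2:ℝ) + 1 = -1 by norm_num, rpow_neg_one]
  field_simp

noncomputable def Psi (n : ℕ) (t : ℝ) : ℝ :=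
  ampl n * ((1 - exp (-(t/2)))^2 * (1 - exp (-(t * dd n / 2)))^2) / t^2

lemma Psi_nonneg (n : ℕ) (t : ℝ) : 0 ≤ Psi n t := by
  rw [Psi]
  apply div_nonneg _ (by positivity)
  exact mul_nonneg (ampl_pos n).le (by positivity)

lemma measurable_Psi (n : ℕ) : Measurable (Psi n) := by
  unfold Psi
  have m1 : Measurable fun t : ℝ => 1 - exp (-(t/2)) :=
    measurable_const.sub (((measurable_id.div_const 2).neg).exp)
  have m2 : Measurable fun t : ℝ => 1 - exp (-(t * dd n / 2)) :=
    measurable_const.sub ((((measurable_id.mul_const (dd n)).div_const 2).neg).exp)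
  exact (measurable_const.mul ((m1.pow_const 2).mul (m2.pow_const 2))).div
    (measurable_id.pow_const 2)

lemma Psi_le_BB (n : ℕ) {t : ℝ} (ht : 0 < t) : Psi n t ≤ ampl n * BB t := by
  have ha := ampl_pos n
  have hd := dd_pos n
  have hd1 := dd_le_one n
  have e1 : 0 ≤ 1 - exp (-(t/2)) := exp_bound1 (by linarith)
  have e2 : 0 ≤ 1 - exp (-(t * dd n / 2)) := exp_bound1 (by positivity)
  have f1 : 1 - exp (-(t/2)) ≤ 1 := exp_bound2
  have f2 : 1 - exp (-(t * dd n / 2)) ≤ 1 := exp_bound2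
  have g1 : 1 - exp (-(t/2)) ≤ t/2 := exp_bound3 _
  have ht2 : (0:ℝ) < t^2 := by positivity
  rw [Psi, BB]
  split_ifs with h1
  · rw [div_le_iff₀ ht2, mul_one]
    have s1 : (1 - exp (-(t/2)))^2 ≤ (t/2)^2 := by nlinarith
    have s2 : (1 - exp (-(t * dd n / 2)))^2 ≤ 1 := by nlinarith
    have key : (1 - exp (-(t/2)))^2 * (1 - exp (-(t * dd n / 2)))^2 ≤ t^2 := by
      nlinarith [sq_nonneg (1 - exp (-(t/2)))]
    nlinarith [mul_le_mul_of_nonneg_left key ha.le]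
  · rw [show ampl n * (t^2)⁻¹ = ampl n / t^2 by ring, div_le_div_iff_of_pos_right ht2]
    have s1 : (1 - exp (-(t/2)))^2 ≤ 1 := by nlinarith
    have s2 : (1 - exp (-(t * dd n / 2)))^2 ≤ 1 := by nlinarith
    have key : (1 - exp (-(t/2)))^2 * (1 - exp (-(t * dd n / 2)))^2 ≤ 1 := by
      nlinarith [sq_nonneg (1 - exp (-(t/2)))]
    nlinarith
lemma integrableOn_Psi (n : ℕ) : IntegrableOn (Psi n) (Ioi (0:ℝ)) := by
  refine Integrable.mono' (integrableOn_BB.const_mul (ampl n))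
    (measurable_Psi n).aestronglyMeasurable ?_
  refine (ae_restrict_iff' measurableSet_Ioi).2 (Filter.Eventually.of_forall fun t ht => ?_)
  rw [Real.norm_eq_abs, abs_of_nonneg (Psi_nonneg n t)]
  exact Psi_le_BB n ht

lemma haar_supp_neg {m : ℤ} {x : ℝ} (h : haar m (-1) x ≠ 0) : x < 0 := by
  have h2 : (0:ℝ) < (2:ℝ)^m := zpow_pos (by norm_num) m
  by_contra hx
  push_neg at hx
  apply h
  unfold haar motherHaar
  have h3 : (1:ℝ) ≤ (2:ℝ)^m * x - ((-1 : ℤ):ℝ) := by push_cast; nlinarith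
  have c1 : ¬(0 ≤ (2:ℝ)^m * x - ((-1:ℤ):ℝ) ∧ (2:ℝ)^m * x - ((-1:ℤ):ℝ) < 1/2) := by
    rintro ⟨-, hc⟩; push_cast at hc h3; linarith
  have c2 : ¬(1/2 ≤ (2:ℝ)^m * x - ((-1:ℤ):ℝ) ∧ (2:ℝ)^m * x - ((-1:ℤ):ℝ) < 1) := by
    rintro ⟨-, hc⟩; push_cast at hc h3; linarith
  rw [if_neg c1, if_neg c2, mul_zero]

lemma ampl_zero : ampl 0 = 1 := by
  rw [ampl]; norm_num
lemma dd_zero : dd 0 = 1 := by rw [dd]; norm_num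

lemma aSeq_eq (n : ℕ) : aSeq n = ∫ t in Ioi (0:ℝ), Psi n t := by
  have ie1 : ∀ t : ℝ, Integrable (fun x => exp (t*x) * haar 0 (-1) x) := by
    intro t
    have := integrable_exp_haar 0 t
    simpa using this
  have ie2 : ∀ t : ℝ, Integrable (fun y => exp (t*y) * haar (n:ℤ) (-1) y) :=
    integrable_exp_haar n
  have ival1 : ∀ t : ℝ, 0 < t →
      ∫ x, exp (t*x) * haar 0 (-1) x = -((1 - exp (-(t/2)))^2 / t) := by
    intro t ht
    have h := integral_exp_haar 0 ht
    rw [ampl_zero, dd_zero] at h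
    simp only [Nat.cast_zero, mul_one, one_mul] at h
    exact h
  have iabs1 : ∀ t : ℝ, 0 < t →
      ∫ x, |exp (t*x) * haar 0 (-1) x| = (1 - exp (-t)) / t := by
    intro t ht
    have h := integral_abs_exp_haar 0 ht
    rw [ampl_zero, dd_zero] at h
    simp only [Nat.cast_zero, mul_one, one_mul] at h
    exact h
  set g : (ℝ×ℝ) → ℝ → ℝ := fun p t =>
    (exp (t*p.1) * haar 0 (-1) p.1) * (exp (t*p.2) * haar (n:ℤ) (-1) p.2) with hgdef
  have hmeas : AEStronglyMeasurable (Function.uncurry g)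
      ((volume : Measure (ℝ×ℝ)).prod (volume.restrict (Ioi 0))) := by
    apply Measurable.aestronglyMeasurable
    exact ((measurable_exp.comp (measurable_snd.mul measurable_fst.fst)).mul
        ((measurable_haar 0 (-1)).comp measurable_fst.fst)).mul
      ((measurable_exp.comp (measurable_snd.mul measurable_fst.snd)).mul
        ((measurable_haar (n:ℤ) (-1)).comp measurable_fst.snd))
  have key : ∀ p : ℝ × ℝ, (1 / (p.1 + p.2)) * haar 0 (-1) p.1 * haar (n:ℤ) (-1) p.2
      = - ∫ t in Ioi (0:ℝ), g p t := by
    intro p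
    by_cases hx : haar 0 (-1) p.1 = 0
    · simp [hgdef, hx]
    by_cases hy : haar (n:ℤ) (-1) p.2 = 0
    · simp [hgdef, hy]
    have hs : p.1 + p.2 < 0 := by
      have hx' := haar_supp_neg hx
      have hy' := haar_supp_neg hy
      linarith
    have hrw : ∀ t : ℝ, g p t
        = (haar 0 (-1) p.1 * haar (n:ℤ) (-1) p.2) * exp (t*(p.1+p.2)) := by
      intro t
      simp only [hgdef]
      rw [show t*(p.1+p.2) = t*p.1 + t*p.2 by ring, exp_add]
      ring
    simp only [hrw]
    rw [integral_const_mul, integral_exp_Ioi_neg hs]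
    have hne : p.1 + p.2 ≠ 0 := ne_of_lt hs
    field_simp
  have hgint : Integrable (Function.uncurry g)
      ((volume : Measure (ℝ×ℝ)).prod (volume.restrict (Ioi 0))) := by
    refine (integrable_prod_iff' hmeas).2 ⟨?_, ?_⟩
    · refine (ae_restrict_iff' measurableSet_Ioi).2 (Filter.Eventually.of_forall fun t ht => ?_)
      have h := (ie1 t).mul_prod (ie2 t)
      rw [← Measure.volume_eq_prod] at h
      exact h
    · have habs : ∀ t ∈ Ioi (0:ℝ), (∫ p : ℝ×ℝ, ‖Function.uncurry g (p, t)‖)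
          = ((1 - exp (-t)) / t) * (ampl n * (1 - exp (-(t * dd n))) / t) := by
        intro t ht
        have hfun : (fun p : ℝ×ℝ => ‖Function.uncurry g (p, t)‖)
            = fun p : ℝ×ℝ => |exp (t*p.1) * haar 0 (-1) p.1|
                * |exp (t*p.2) * haar (n:ℤ) (-1) p.2| := by
          funext p
          simp only [Function.uncurry, hgdef, Real.norm_eq_abs, abs_mul]
        rw [hfun, Measure.volume_eq_prod,
          integral_prod_mul (fun x => |exp (t*x) * haar 0 (-1) x|)
            (fun y => |exp (t*y) * haar (n:ℤ) (-1) y|),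
          iabs1 t ht, integral_abs_exp_haar n ht]
      have hPhi : Integrable
          (fun t => ((1 - exp (-t)) / t) * (ampl n * (1 - exp (-(t * dd n))) / t))
          (volume.restrict (Ioi 0)) := by
        refine Integrable.mono' (integrableOn_BB.const_mul (ampl n)) ?_ ?_
        · apply Measurable.aestronglyMeasurable
          exact ((measurable_const.sub (measurable_id.neg.exp)).div measurable_id).mul
            ((measurable_const.mul (measurable_const.sub
              ((measurable_id.mul_const (dd n)).neg.exp))).div measurable_id)
        · refine (ae_restrict_iff' measurableSet_Ioi).2
            (Filter.Eventually.of_forall fun t ht => ?_)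
          have ht' : (0:ℝ) < t := ht
          have ha := ampl_pos n
          have hd := dd_pos n
          have hd1 := dd_le_one n
          have a0 : 0 ≤ 1 - exp (-t) := exp_bound1 ht'.le
          have a1 : 1 - exp (-t) ≤ 1 := exp_bound2
          have a2 : 1 - exp (-t) ≤ t := exp_bound3 t
          have b0 : 0 ≤ 1 - exp (-(t * dd n)) := exp_bound1 (by positivity)
          have b1 : 1 - exp (-(t * dd n)) ≤ 1 := exp_bound2
          have b2 : 1 - exp (-(t * dd n)) ≤ t * dd n := exp_bound3 _
          have ht2 : (0:ℝ) < t^2 := by positivity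
          rw [Real.norm_eq_abs, abs_of_nonneg (by positivity)]
          rw [show ((1 - exp (-t)) / t) * (ampl n * (1 - exp (-(t * dd n))) / t)
              = ((1 - exp (-t)) * (ampl n * (1 - exp (-(t * dd n))))) / t^2 by ring]
          rw [BB]
          split_ifs with h1
          · rw [div_le_iff₀ ht2, mul_one]
            have hbt : 1 - exp (-(t * dd n)) ≤ t := by nlinarith
            have habt : (1 - exp (-t)) * (1 - exp (-(t * dd n))) ≤ t * t :=
              mul_le_mul a2 hbt b0 ht'.le
            nlinarith [mul_le_mul_of_nonneg_left habt ha.le]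
          · have hr : ampl n * (t^2)⁻¹ * t^2 = ampl n := by field_simp
            rw [div_le_iff₀ ht2, hr]
            nlinarith [mul_le_mul a1 b1 b0 (le_of_lt (by linarith : (0:ℝ) < 1))]
      refine hPhi.congr ?_
      refine (ae_restrict_iff' measurableSet_Ioi).2
        (Filter.Eventually.of_forall fun t ht => ?_)
      exact (habs t ht).symm
  unfold aSeq Aent
  rw [show (fun p : ℝ × ℝ => (1 / (p.1 + p.2)) * haar 0 (-1) p.1 * haar (n:ℤ) (-1) p.2)
      = fun p : ℝ × ℝ => - ∫ t in Ioi (0:ℝ), g p t from funext key]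
  rw [integral_neg, neg_neg, integral_integral_swap hgint]
  refine setIntegral_congr_fun measurableSet_Ioi (fun t ht => ?_)
  have ht' : (0:ℝ) < t := ht
  have hprod : (∫ p : ℝ×ℝ, g p t)
      = (∫ x, exp (t*x) * haar 0 (-1) x) * (∫ y, exp (t*y) * haar (n:ℤ) (-1) y) := by
    rw [Measure.volume_eq_prod]
    exact integral_prod_mul (fun x => exp (t*x) * haar 0 (-1) x)
      (fun y => exp (t*y) * haar (n:ℤ) (-1) y)
  rw [hprod, ival1 t ht', integral_exp_haar n ht']
  rw [Psi]
  have ht0 : t ≠ 0 := ne_of_gt ht'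
  field_simp

lemma aSeq_nonneg (n : ℕ) : 0 ≤ aSeq n := by
  rw [aSeq_eq]
  exact setIntegral_nonneg measurableSet_Ioi (fun t _ => Psi_nonneg n t)

lemma integrableOn_inv_sq_Ioi {T : ℝ} (hT : 0 < T) :
    IntegrableOn (fun t : ℝ => (t^2)⁻¹) (Ioi T) := by
  refine IntegrableOn.congr_fun
    (integrableOn_Ioi_rpow_of_lt (by norm_num : (-2:ℝ) < -1) hT)
    (fun x hx => ?_) measurableSet_Ioi
  show x ^ (-2:ℝ) = (x^2)⁻¹
  rw [show (-2:ℝ) = -((2:ℕ):ℝ) by norm_num, rpow_neg (lt_trans hT hx).le, rpow_natCast]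

lemma aSeq_le (n : ℕ) : aSeq n ≤ ampl n * dd n := by
  have ha := ampl_pos n
  have hd := dd_pos n
  set T : ℝ := 2 / dd n with hTdef
  have hT : 0 < T := by positivity
  rw [aSeq_eq, ← Ioc_union_Ioi_eq_Ioi hT.le,
    setIntegral_union (Ioc_disjoint_Ioi le_rfl) measurableSet_Ioi
      ((integrableOn_Psi n).mono_set (by
        rw [← Ioc_union_Ioi_eq_Ioi hT.le]; exact subset_union_left))
      ((integrableOn_Psi n).mono_set (by
        rw [← Ioc_union_Ioi_eq_Ioi hT.le]; exact subset_union_right))]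
  have b1 : ∫ t in Ioc (0:ℝ) T, Psi n t ≤ ampl n * dd n / 2 := by
    have hle : ∫ t in Ioc (0:ℝ) T, Psi n t
        ≤ ∫ _ in Ioc (0:ℝ) T, (ampl n * (dd n / 2)^2) := by
      refine setIntegral_mono_on
        ((integrableOn_Psi n).mono_set (by
          rw [← Ioc_union_Ioi_eq_Ioi hT.le]; exact subset_union_left))
        (integrableOn_const measure_Ioc_lt_top.ne) measurableSet_Ioc
        (fun t ht => ?_)
      have ht' : 0 < t := ht.1
      have ht2 : (0:ℝ) < t^2 := by positivity
      have e1 : 0 ≤ 1 - exp (-(t/2)) := exp_bound1 (by positivity)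
      have f1 : 1 - exp (-(t/2)) ≤ 1 := exp_bound2
      have e2 : 0 ≤ 1 - exp (-(t * dd n / 2)) := exp_bound1 (by positivity)
      have g2 : 1 - exp (-(t * dd n / 2)) ≤ t * dd n / 2 := exp_bound3 _
      rw [Psi, div_le_iff₀ ht2]
      have hb2 : (1 - exp (-(t * dd n / 2)))^2 ≤ (t * dd n / 2)^2 :=
        pow_le_pow_left₀ e2 g2 2
      have ha2 : (1 - exp (-(t/2)))^2 ≤ 1 := by nlinarith
      have key : (1 - exp (-(t/2)))^2 * (1 - exp (-(t * dd n / 2)))^2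
          ≤ (t * dd n / 2)^2 := by
        nlinarith [mul_le_mul ha2 hb2 (sq_nonneg (1 - exp (-(t * dd n / 2)))) zero_le_one]
      calc ampl n * ((1 - exp (-(t/2)))^2 * (1 - exp (-(t * dd n / 2)))^2)
          ≤ ampl n * (t * dd n / 2)^2 := mul_le_mul_of_nonneg_left key ha.le
        _ = ampl n * (dd n / 2)^2 * t^2 := by ring
    rw [setIntegral_const] at hle
    have hvol : (volume (Ioc (0:ℝ) T)).toReal = T := by
      rw [Real.volume_Ioc, sub_zero, ENNReal.toReal_ofReal hT.le]
    rw [measureReal_def, hvol, smul_eq_mul] at hle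
    calc ∫ t in Ioc (0:ℝ) T, Psi n t ≤ T * (ampl n * (dd n / 2)^2) := hle
      _ = ampl n * dd n / 2 := by
          rw [hTdef]; field_simp
  have b2 : ∫ t in Ioi T, Psi n t ≤ ampl n * dd n / 2 := by
    have hle : ∫ t in Ioi T, Psi n t ≤ ∫ t in Ioi T, ampl n * (t^2)⁻¹ := by
      refine setIntegral_mono_on
        ((integrableOn_Psi n).mono_set (by
          rw [← Ioc_union_Ioi_eq_Ioi hT.le]; exact subset_union_right))
        ((integrableOn_inv_sq_Ioi hT).const_mul _) measurableSet_Ioi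
        (fun t ht => ?_)
      have ht' : 0 < t := lt_trans hT ht
      have ht2 : (0:ℝ) < t^2 := by positivity
      have e1 : 0 ≤ 1 - exp (-(t/2)) := exp_bound1 (by positivity)
      have f1 : 1 - exp (-(t/2)) ≤ 1 := exp_bound2
      have e2 : 0 ≤ 1 - exp (-(t * dd n / 2)) := exp_bound1 (by positivity)
      have f2 : 1 - exp (-(t * dd n / 2)) ≤ 1 := exp_bound2
      rw [Psi, div_le_iff₀ ht2, show ampl n * (t^2)⁻¹ * t^2 = ampl n by field_simp]
      have ha2 : (1 - exp (-(t/2)))^2 ≤ 1 := by nlinarith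
      have hb2 : (1 - exp (-(t * dd n / 2)))^2 ≤ 1 := by nlinarith
      have key : (1 - exp (-(t/2)))^2 * (1 - exp (-(t * dd n / 2)))^2 ≤ 1 := by
        nlinarith [mul_le_mul ha2 hb2 (sq_nonneg (1 - exp (-(t * dd n / 2)))) zero_le_one]
      nlinarith [mul_le_mul_of_nonneg_left key ha.le]
    rw [integral_const_mul, integral_inv_sq_Ioi hT] at hle
    calc ∫ t in Ioi T, Psi n t ≤ ampl n * T⁻¹ := hle
      _ = ampl n * dd n / 2 := by rw [hTdef, inv_div]; ring
  linarith

lemma aSeq_le_pow (n : ℕ) : aSeq n ≤ ((Real.sqrt 2)⁻¹) ^ n := by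
  have hs : (0:ℝ) < Real.sqrt 2 := Real.sqrt_pos.2 (by norm_num)
  have hA : ampl n = (Real.sqrt 2) ^ n := by
    rw [ampl, Real.sqrt_eq_rpow, ← Real.rpow_natCast ((2:ℝ) ^ ((1:ℝ)/2)) n,
      ← Real.rpow_mul (by norm_num : (0:ℝ) ≤ 2)]
    congr 1
    ring
  have hD : dd n = ((Real.sqrt 2) ^ n * (Real.sqrt 2) ^ n)⁻¹ := by
    rw [dd, ← mul_pow, Real.mul_self_sqrt (by norm_num)]
  have : ampl n * dd n = ((Real.sqrt 2)⁻¹) ^ n := by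
    rw [hA, hD, inv_pow]
    have hpn : (0:ℝ) < (Real.sqrt 2) ^ n := by positivity
    field_simp
  calc aSeq n ≤ ampl n * dd n := aSeq_le n
    _ = _ := this

lemma summable_aSeq : Summable (fun k => aSeq (k+1)) := by
  have hs : (0:ℝ) < Real.sqrt 2 := Real.sqrt_pos.2 (by norm_num)
  have h1 : (1:ℝ) < Real.sqrt 2 := by
    rw [show (1:ℝ) = Real.sqrt 1 from (Real.sqrt_one).symm]
    exact Real.sqrt_lt_sqrt (by norm_num) (by norm_num)
  have hr0 : (0:ℝ) ≤ (Real.sqrt 2)⁻¹ := by positivity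
  have hr1 : (Real.sqrt 2)⁻¹ < 1 := inv_lt_one_of_one_lt₀ h1
  have hgeo : Summable (fun k : ℕ => ((Real.sqrt 2)⁻¹) ^ k * (Real.sqrt 2)⁻¹) :=
    (summable_geometric_of_lt_one hr0 hr1).mul_right _
  have hgeo' : Summable (fun k : ℕ => ((Real.sqrt 2)⁻¹) ^ (k+1)) :=
    hgeo.congr (fun k => (pow_succ _ k).symm)
  exact Summable.of_nonneg_of_le (fun k => aSeq_nonneg (k+1))
    (fun k => aSeq_le_pow (k+1)) hgeo'

lemma hTbL {m : ℕ} (A : Matrix (Fin (m+1)) (Fin (m+1)) ℝ) (hA : A.IsHermitian) (i : Fin (m+1)) :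
    Matrix.toEuclideanLin A (hA.eigenvectorBasis i) = hA.eigenvalues i • hA.eigenvectorBasis i := by
  have h1 := hA.mulVec_eigenvectorBasis i
  rw [Matrix.toEuclideanLin_apply]
  exact congrArg (WithLp.equiv 2 _).symm h1

lemma rayleigh_bound {m : ℕ} (A : Matrix (Fin (m+1)) (Fin (m+1)) ℝ) (hA : A.IsHermitian)
    (v : EuclideanSpace ℝ (Fin (m+1))) :
    (inner ℝ v (Matrix.toEuclideanLin A v) : ℝ)
      ≤ (⨆ i, hA.eigenvalues i) * (inner ℝ v v : ℝ) := by
  set b := hA.eigenvectorBasis with hb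
  set w : Fin (m+1) → ℝ := fun i => b.repr v i with hw
  have hv : v = ∑ i, w i • b i := (b.sum_repr v).symm
  have hTv : Matrix.toEuclideanLin A v = ∑ i, (w i * hA.eigenvalues i) • b i := by
    conv_lhs => rw [hv]
    rw [map_sum]
    refine Finset.sum_congr rfl (fun i _ => ?_)
    rw [_root_.map_smul, hTbL A hA i, smul_smul]
  have hinner : (inner ℝ v (Matrix.toEuclideanLin A v) : ℝ)
      = ∑ i, hA.eigenvalues i * (w i)^2 := by
    rw [hTv, inner_sum]
    refine Finset.sum_congr rfl (fun i _ => ?_)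
    rw [real_inner_smul_right, real_inner_comm, ← OrthonormalBasis.repr_apply_apply]
    show w i * hA.eigenvalues i * w i = hA.eigenvalues i * (w i)^2
    ring
  have hnorm : (inner ℝ v v : ℝ) = ∑ i, (w i)^2 := by
    rw [← b.repr.inner_map_map v v]
    rw [PiLp.inner_apply]
    refine Finset.sum_congr rfl fun i _ => ?_
    simp [RCLike.inner_apply, conj_trivial, sq, hw]
  rw [hinner, hnorm, Finset.mul_sum]
  refine Finset.sum_le_sum (fun i _ => ?_)
  have hle : hA.eigenvalues i ≤ ⨆ j, hA.eigenvalues j :=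
    le_ciSup (Set.Finite.bddAbove (Set.finite_range _)) i
  exact mul_le_mul_of_nonneg_right hle (sq_nonneg _)

lemma basis_coe_ne {m : ℕ} (A : Matrix (Fin (m+1)) (Fin (m+1)) ℝ) (hA : A.IsHermitian) (i : Fin (m+1)) :
    (⇑(hA.eigenvectorBasis i) : Fin (m+1) → ℝ) ≠ 0 := by
  intro h0
  have hb1 : ‖hA.eigenvectorBasis i‖ = 1 := hA.eigenvectorBasis.orthonormal.1 i
  have : hA.eigenvectorBasis i = 0 := by
    ext j
    exact congrFun h0 j
  rw [this, norm_zero] at hb1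
  norm_num at hb1

noncomputable def QQ (N : ℕ) : ℝ := ∑ i : Fin (N+1), ∑ j : Fin (N+1), AN1 N i j

lemma QQ_le_sup (N : ℕ) (hA : (AN1 N).IsHermitian) :
    QQ N ≤ (⨆ i, hA.eigenvalues i) * (N+1) := by
  set v : EuclideanSpace ℝ (Fin (N+1)) := WithLp.toLp 2 (fun _ => (1:ℝ)) with hv
  have h := rayleigh_bound (AN1 N) hA v
  have h1 : (inner ℝ v (Matrix.toEuclideanLin (AN1 N) v) : ℝ) = QQ N := by
    rw [PiLp.inner_apply]
    simp only [RCLike.inner_apply, conj_trivial]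
    rw [QQ]
    refine Finset.sum_congr rfl fun i _ => ?_
    simp [hv, Matrix.toEuclideanLin_apply, Matrix.mulVec, dotProduct]
  have h2 : (inner ℝ v v : ℝ) = (N+1 : ℝ) := by
    rw [PiLp.inner_apply]
    simp [hv]
  rw [h1, h2] at h
  exact h

lemma eigen_le (N : ℕ) (hA : (AN1 N).IsHermitian) (i : Fin (N+1)) {P : ℝ}
    (hrow : ∀ k : Fin (N+1), ∑ j ∈ Finset.univ.erase k,
      aSeq (((k:ℤ)-(j:ℤ)).natAbs) ≤ 2 * P) :
    hA.eigenvalues i ≤ aSeq 0 + 2 * P := by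
  have hev : Module.End.HasEigenvector (Matrix.toLin' (AN1 N)) (hA.eigenvalues i)
      ⇑(hA.eigenvectorBasis i) := by
    constructor
    · rw [Module.End.mem_eigenspace_iff, Matrix.toLin'_apply]
      exact hA.mulVec_eigenvectorBasis i
    · exact basis_coe_ne (AN1 N) hA i
  obtain ⟨k, hk⟩ := eigenvalue_mem_ball (Module.End.hasEigenvalue_of_hasEigenvector hev)
  rw [Metric.mem_closedBall, Real.dist_eq] at hk
  have hdiag : AN1 N k k = aSeq 0 := by simp [AN1]
  have hsum : ∑ j ∈ Finset.univ.erase k, ‖AN1 N k j‖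
      = ∑ j ∈ Finset.univ.erase k, aSeq (((k:ℤ)-(j:ℤ)).natAbs) :=
    Finset.sum_congr rfl fun j _ => by
      show ‖aSeq (((k:ℤ)-(j:ℤ)).natAbs)‖ = _
      rw [Real.norm_eq_abs, abs_of_nonneg (aSeq_nonneg _)]
  have h1 := (abs_sub_le_iff.1 hk).1
  rw [hsum, hdiag] at h1
  linarith [hrow k]

lemma row_sum_le (N : ℕ) (k : Fin (N+1)) :
    ∑ j ∈ Finset.univ.erase k, aSeq (((k:ℤ)-(j:ℤ)).natAbs) ≤ 2 * ∑' m, aSeq (m+1) := by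
  have hfull : ∑ j : Fin (N+1), aSeq (((k:ℤ)-(j:ℤ)).natAbs)
      = aSeq 0 + ∑ j ∈ Finset.univ.erase k, aSeq (((k:ℤ)-(j:ℤ)).natAbs) := by
    rw [← Finset.add_sum_erase _ _ (Finset.mem_univ k)]
    congr 2
    simp
  have hK : (k:ℕ) ≤ N := Nat.lt_succ_iff.1 k.isLt
  have hmain : ∑ j : Fin (N+1), aSeq (((k:ℤ)-(j:ℤ)).natAbs)
      ≤ aSeq 0 + 2 * ∑' m, aSeq (m+1) := by
    rw [Fin.sum_univ_eq_sum_range (fun m => aSeq (((k:ℤ)-(m:ℤ)).natAbs)) (N+1)]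
    rw [Finset.range_eq_Ico,
      ← Finset.sum_Ico_consecutive _ (Nat.zero_le ((k:ℕ)+1)) (by omega : (k:ℕ)+1 ≤ N+1)]
    have h1 : ∑ m ∈ Finset.Ico 0 ((k:ℕ)+1), aSeq (((k:ℤ)-(m:ℤ)).natAbs)
        = ∑ m ∈ Finset.range ((k:ℕ)+1), aSeq ((k:ℕ) - m) := by
      rw [← Finset.range_eq_Ico]
      refine Finset.sum_congr rfl fun m hm => ?_
      have hm' := Finset.mem_range.1 hm
      congr 1
      omega
    have h2 : ∑ m ∈ Finset.range ((k:ℕ)+1), aSeq ((k:ℕ) - m)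
        = ∑ m ∈ Finset.range ((k:ℕ)+1), aSeq m := by
      have h := Finset.sum_range_reflect (fun m => aSeq m) ((k:ℕ)+1)
      simp only [Nat.add_sub_cancel] at h
      exact h
    have h3 : ∑ m ∈ Finset.range ((k:ℕ)+1), aSeq m
        = aSeq 0 + ∑ m ∈ Finset.range (k:ℕ), aSeq (m+1) := by
      rw [Finset.sum_range_succ']
      ring
    have h4 : ∑ m ∈ Finset.Ico ((k:ℕ)+1) (N+1), aSeq (((k:ℤ)-(m:ℤ)).natAbs)
        = ∑ i ∈ Finset.range (N - (k:ℕ)), aSeq (i+1) := by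
      rw [Finset.sum_Ico_eq_sum_range]
      have hcard : (N+1) - ((k:ℕ)+1) = N - (k:ℕ) := by omega
      rw [hcard]
      refine Finset.sum_congr rfl fun i hi => ?_
      congr 1
      omega
    have hb1 : ∑ m ∈ Finset.range (k:ℕ), aSeq (m+1) ≤ ∑' m, aSeq (m+1) :=
      Summable.sum_le_tsum _ (fun _ _ => aSeq_nonneg _) summable_aSeq
    have hb2 : ∑ i ∈ Finset.range (N - (k:ℕ)), aSeq (i+1) ≤ ∑' m, aSeq (m+1) :=
      Summable.sum_le_tsum _ (fun _ _ => aSeq_nonneg _) summable_aSeq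
    rw [h1, h2, h3, h4]
    linarith
  linarith [hfull ▸ hmain]

lemma sum_reflect_shift (N : ℕ) :
    ∑ m ∈ Finset.range (N+1), aSeq (N+1-m) = ∑ m ∈ Finset.range (N+1), aSeq (m+1) := by
  have h := Finset.sum_range_reflect (fun m => aSeq (m+1)) (N+1)
  rw [← h]
  refine Finset.sum_congr rfl fun j hj => ?_
  have hj' := Finset.mem_range.1 hj
  congr 1
  omega

lemma col_term (N : ℕ) : ∑ i : Fin (N+1), AN1 (N+1) i.castSucc (Fin.last (N+1))
    = ∑ m ∈ Finset.range (N+1), aSeq (m+1) := by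
  have h1 : ∀ i : Fin (N+1), AN1 (N+1) i.castSucc (Fin.last (N+1)) = aSeq (N+1-(i:ℕ)) := by
    intro i
    have hi := i.isLt
    simp only [AN1, Fin.coe_castSucc, Fin.val_last]
    congr 1
    omega
  rw [Finset.sum_congr rfl (fun i _ => h1 i),
    Fin.sum_univ_eq_sum_range (fun m => aSeq (N+1-m)) (N+1), sum_reflect_shift]

lemma row_term (N : ℕ) : ∑ j : Fin (N+1), AN1 (N+1) (Fin.last (N+1)) j.castSucc
    = ∑ m ∈ Finset.range (N+1), aSeq (m+1) := by
  have h1 : ∀ j : Fin (N+1), AN1 (N+1) (Fin.last (N+1)) j.castSucc = aSeq (N+1-(j:ℕ)) := by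
    intro j
    have hj := j.isLt
    simp only [AN1, Fin.coe_castSucc, Fin.val_last]
    congr 1
    omega
  rw [Finset.sum_congr rfl (fun j _ => h1 j),
    Fin.sum_univ_eq_sum_range (fun m => aSeq (N+1-m)) (N+1), sum_reflect_shift]

lemma QQ_succ (N : ℕ) :
    QQ (N+1) = QQ N + aSeq 0 + 2 * ∑ m ∈ Finset.range (N+1), aSeq (m+1) := by
  have hout : QQ (N+1)
      = (∑ i : Fin (N+2), ((∑ j : Fin (N+1), AN1 (N+1) i j.castSucc)
          + AN1 (N+1) i (Fin.last (N+1)))) := by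
    rw [QQ]
    exact Finset.sum_congr rfl (fun i _ => Fin.sum_univ_castSucc _)
  rw [hout, Finset.sum_add_distrib]
  rw [Fin.sum_univ_castSucc
    (f := fun i : Fin (N+2) => ∑ j : Fin (N+1), AN1 (N+1) i j.castSucc)]
  rw [Fin.sum_univ_castSucc (f := fun i : Fin (N+2) => AN1 (N+1) i (Fin.last (N+1)))]
  have hQQ : ∑ i : Fin (N+1), ∑ j : Fin (N+1), AN1 (N+1) i.castSucc j.castSucc = QQ N := by
    rw [QQ]
    refine Finset.sum_congr rfl fun i _ => Finset.sum_congr rfl fun j _ => ?_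
    simp [AN1]
  have hlastlast : AN1 (N+1) (Fin.last (N+1)) (Fin.last (N+1)) = aSeq 0 := by
    simp [AN1]
  rw [hQQ, row_term, col_term, hlastlast]
  ring

lemma QQ_formula (N : ℕ) : QQ N = (N+1 : ℝ) * aSeq 0
    + 2 * ∑ k ∈ Finset.range (N+1), ∑ m ∈ Finset.range k, aSeq (m+1) := by
  induction N with
  | zero =>
      simp [QQ, AN1]
  | succ N ih =>
      rw [QQ_succ, ih]
      conv_rhs => rw [Finset.sum_range_succ
        (f := fun k => ∑ m ∈ Finset.range k, aSeq (m+1))]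
      push_cast
      ring

lemma lambdaMax_aux (hA : ∀ N, (AN1 N).IsHermitian) :
    Tendsto (fun N => ⨆ i, (hA N).eigenvalues i) atTop
      (nhds (aSeq 0 + 2 * ∑' n : ℕ, aSeq (n + 1))) := by
  set P : ℝ := ∑' n : ℕ, aSeq (n+1) with hP
  have hup : ∀ N, (⨆ i, (hA N).eigenvalues i) ≤ aSeq 0 + 2 * P :=
    fun N => ciSup_le (fun i => eigen_le N (hA N) i (fun k => row_sum_le N k))
  have hlow : ∀ N, QQ N / ((N:ℝ)+1) ≤ ⨆ i, (hA N).eigenvalues i := by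
    intro N
    rw [div_le_iff₀ (by positivity : (0:ℝ) < (N:ℝ)+1)]
    exact QQ_le_sup N (hA N)
  have hcesaro : Tendsto (fun M : ℕ => ((M:ℝ))⁻¹
      * ∑ k ∈ Finset.range M, ∑ m ∈ Finset.range k, aSeq (m+1)) atTop (𝓝 P) :=
    (summable_aSeq.hasSum.tendsto_sum_nat).cesaro
  have hcomp : Tendsto (fun N : ℕ => (((N+1 : ℕ)):ℝ)⁻¹
      * ∑ k ∈ Finset.range (N+1), ∑ m ∈ Finset.range k, aSeq (m+1)) atTop (𝓝 P) :=
    hcesaro.comp (tendsto_add_atTop_nat 1)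
  have hR : Tendsto (fun N : ℕ => QQ N / ((N:ℝ)+1)) atTop (𝓝 (aSeq 0 + 2 * P)) := by
    have h2 : Tendsto (fun N : ℕ => aSeq 0 + 2 * ((((N+1 : ℕ)):ℝ)⁻¹
        * ∑ k ∈ Finset.range (N+1), ∑ m ∈ Finset.range k, aSeq (m+1))) atTop
        (𝓝 (aSeq 0 + 2 * P)) :=
      tendsto_const_nhds.add (hcomp.const_mul 2)
    refine h2.congr (fun N => ?_)
    rw [QQ_formula]
    have hN : ((N:ℝ)+1) ≠ 0 := by positivity
    push_cast
    field_simp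
  exact tendsto_of_tendsto_of_tendsto_of_le_of_le hR tendsto_const_nhds hlow hup

/-- The largest eigenvalue of `A(N,1)` converges as `N → ∞`, and
`lim_{N→∞} λ_max(A(N,1)) = a_0 + 2 Σ_{n=1}^∞ a_n`. -/
theorem lambdaMax_tendsto (hA : ∀ N, (AN1 N).IsHermitian) :
    Filter.Tendsto (fun N => ⨆ i, (hA N).eigenvalues i) Filter.atTop
      (nhds (aSeq 0 + 2 * ∑' n : ℕ, aSeq (n + 1))) := by
  exact lambdaMax_aux hA
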